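/- For a finite connected graph G with unit edge weights, the sum of effective resistances over all edges equals n − 1, where n is the number of vertices: ∑_{e∈E} R_eff(e) = n − 1. -/

import Mathlib

open Matrix

/-- `P` is the Moore–Penrose pseudoinverse of `M`. -/
def IsMoorePenroseInverse {V : Type*} [Fintype V] (M P : Matrix V V ℝ) : Prop :=
  M * P * M = M ∧ P * M * P = P ∧ (M * P)ᵀ = M * P ∧ (P * M)ᵀ = P * M

/-- Effective resistance between `u` and `v` from a pseudoinverse `P` of the Laplacian. -/
noncomputable def effRes {V : Type*} [Fintype V] [DecidableEq V]
    (P : Matrix V V ℝ) (u v : V) : ℝ :=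
  (Pi.single u (1:ℝ) - Pi.single v 1) ⬝ᵥ (P *ᵥ (Pi.single u (1:ℝ) - Pi.single v 1))

/-!
Expanding `effRes P u v = P u u - P u v - P v u + P v v` and summing over ordered pairs of adjacent
vertices, the diagonal terms give `2 tr (D P)` and the others `2 tr (A P)`, so the sum is
`2 tr (L P)`. From `L P L = L` the matrix `L P` is idempotent, so its trace is its rank, which is
`rank L`; for a connected graph the kernel of `L` is the line of constant vectors, so
`rank L = n - 1`.
-/

namespace Matrix

theorem rank_mul_eq_left_of_mul_mul_eq_self {m n R : Type*} [Fintype m] [Fintype n]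
    [CommRing R] [StrongRankCondition R] {A : Matrix m n R} {B : Matrix n m R}
    (h : A * B * A = A) : (A * B).rank = A.rank :=
  le_antisymm (rank_mul_le_left A B) <| by
    conv_lhs => rw [← h]
    exact rank_mul_le_left _ A

variable {n K : Type*} [Fintype n] [DecidableEq n] [Field K]

theorem trace_eq_rank_of_isIdempotentElem {A : Matrix n n K} (hA : IsIdempotentElem A) :
    A.trace = A.rank := by
  have hlin : IsIdempotentElem (toLin' A) := hA.map toLinAlgEquiv'
  rw [← trace_toLin'_eq, (LinearMap.IsIdempotentElem.isProj_range _ hlin).trace, rank,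
    toLin'_apply']

theorem trace_mul_eq_rank_of_mul_mul_eq_self {A B : Matrix n n K} (h : A * B * A = A) :
    (A * B).trace = A.rank := by
  have hAB : IsIdempotentElem (A * B) := by
    rw [IsIdempotentElem, ← Matrix.mul_assoc, h]
  rw [trace_eq_rank_of_isIdempotentElem hAB, rank_mul_eq_left_of_mul_mul_eq_self h]

end Matrix

theorem effRes_eq {V : Type*} [Fintype V] [DecidableEq V] (P : Matrix V V ℝ) (u v : V) :
    effRes P u v = P u u - P u v - P v u + P v v := by
  simp only [effRes, sub_dotProduct, mulVec_sub, dotProduct_sub, single_one_dotProduct,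
    mulVec_single_one, col_apply]
  ring

namespace SimpleGraph

variable {V : Type*} [Fintype V] (G : SimpleGraph V) [DecidableRel G.Adj]

theorem Connected.rank_lapMatrix [DecidableEq V] (hG : G.Connected) :
    (G.lapMatrix ℝ).rank = Fintype.card V - 1 := by
  have : Nonempty G.ConnectedComponent := hG.nonempty.map G.connectedComponentMk
  have hker : Module.finrank ℝ (LinearMap.ker (toLin' (G.lapMatrix ℝ))) = 1 := by
    rw [← card_connectedComponent_eq_finrank_ker_toLin'_lapMatrix]
    exact le_antisymm (Fintype.card_le_one_iff_subsingleton.mpr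
      hG.preconnected.subsingleton_connectedComponent) Fintype.card_pos
  have hrank_nullity := LinearMap.finrank_range_add_finrank_ker (toLin' (G.lapMatrix ℝ))
  rw [hker, Module.finrank_fintype_fun_eq_card, toLin'_apply'] at hrank_nullity
  rw [rank]
  omega

theorem sum_adj_comm {M : Type*} [AddCommMonoid M] (f : V → V → M) :
    ∑ u, ∑ v, (if G.Adj u v then f u v else 0) = ∑ u, ∑ v, if G.Adj u v then f v u else 0 := by
  rw [Finset.sum_comm]
  simp only [G.adj_comm]

variable {R : Type*} [NonAssocSemiring R]

theorem trace_degMatrix_mul [DecidableEq V] (P : Matrix V V R) :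
    (G.degMatrix R * P).trace = ∑ u, ∑ v, if G.Adj u v then P u u else 0 := by
  simp only [trace, diag_apply, degMatrix, diagonal_mul, degree_eq_sum_if_adj, Finset.sum_mul,
    ite_mul, one_mul, zero_mul]

theorem trace_adjMatrix_mul (P : Matrix V V R) :
    (G.adjMatrix R * P).trace = ∑ u, ∑ v, if G.Adj u v then P v u else 0 := by
  simp [trace, mul_apply, adjMatrix_apply]

theorem sum_adj_effRes_eq_two_mul_trace [DecidableEq V] (P : Matrix V V ℝ) :
    ∑ u, ∑ v, (if G.Adj u v then effRes P u v else 0) = 2 * (G.lapMatrix ℝ * P).trace := by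
  have hsplit (u v : V) : (if G.Adj u v then effRes P u v else 0) =
      (if G.Adj u v then P u u else 0) - (if G.Adj u v then P v u else 0) +
        ((if G.Adj u v then P v v else 0) - (if G.Adj u v then P u v else 0)) := by
    split_ifs
    · rw [effRes_eq]; ring
    · simp
  simp only [hsplit, Finset.sum_add_distrib, Finset.sum_sub_distrib, lapMatrix, Matrix.sub_mul,
    trace_sub, trace_degMatrix_mul, trace_adjMatrix_mul]
  rw [← G.sum_adj_comm fun u _ ↦ P u u, ← G.sum_adj_comm fun u v ↦ P v u]
  ring

end SimpleGraph

/-- Each unordered edge is counted twice in the double sum, hence the factor `1/2`. -/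
theorem foster_sum_effRes {V : Type*} [Fintype V] [DecidableEq V]
    (G : SimpleGraph V) [DecidableRel G.Adj] (hconn : G.Connected)
    (P : Matrix V V ℝ) (hP : IsMoorePenroseInverse (G.lapMatrix ℝ) P) :
    (1 / 2) * ∑ u : V, ∑ v : V, (if G.Adj u v then effRes P u v else 0) =
      (Fintype.card V : ℝ) - 1 := by
  have : Nonempty V := hconn.nonempty
  rw [G.sum_adj_effRes_eq_two_mul_trace, trace_mul_eq_rank_of_mul_mul_eq_self hP.1,
    hconn.rank_lapMatrix, Nat.cast_pred Fintype.card_pos]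
  ring
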